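/- Let X, Y, Z, and W be four mm-spaces and let p ∈ [1,∞]. Then □(X ×_p Z, Y ×_p W) ≤ □(X, Y) + □(Z, W). -/

import Mathlib

open MeasureTheory Filter Topology NNReal ENNReal TopologicalSpace

noncomputable section

/-- A function `F : [0,∞)^N → [0,∞)` is metric preserving if for any `N` metric
spaces `X i`, the function `dF x y = F (fun i => dist (x i) (y i))` is a metric on `∀ i, X i`. -/
def IsMetricPreservingN (N : ℕ) (F : (Fin N → ℝ≥0) → ℝ≥0) : Prop :=
  ∀ (X : Fin N → Type) [∀ i, MetricSpace (X i)],
    (∀ x y : (i : Fin N) → X i, (F (fun i => nndist (x i) (y i)) = 0 ↔ x = y)) ∧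
    (∀ x y : (i : Fin N) → X i,
      F (fun i => nndist (x i) (y i)) = F (fun i => nndist (y i) (x i))) ∧
    (∀ x y z : (i : Fin N) → X i,
      F (fun i => nndist (x i) (z i)) ≤
        F (fun i => nndist (x i) (y i)) + F (fun i => nndist (y i) (z i)))

/-- A function `F : [0,∞)² → [0,∞)` is metric preserving if for any two metric spaces
`X`, `Y`, the function `dF p q = F (dist p.1 q.1) (dist p.2 q.2)` is a metric on `X × Y`. -/
def IsMetricPreserving2 (F : ℝ≥0 → ℝ≥0 → ℝ≥0) : Prop :=
  ∀ (X Y : Type) [MetricSpace X] [MetricSpace Y],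
    (∀ p q : X × Y, (F (nndist p.1 q.1) (nndist p.2 q.2) = 0 ↔ p = q)) ∧
    (∀ p q : X × Y,
      F (nndist p.1 q.1) (nndist p.2 q.2) = F (nndist q.1 p.1) (nndist q.2 p.2)) ∧
    (∀ p q r : X × Y,
      F (nndist p.1 r.1) (nndist p.2 r.2) ≤
        F (nndist p.1 q.1) (nndist p.2 q.2) + F (nndist q.1 r.1) (nndist q.2 r.2))

/-- A function `f : [0,∞) → [0,∞)` is metric preserving if for any metric space `X`,
`f ∘ dist` is a metric on `X`. -/
def IsMetricPreserving1 (f : ℝ≥0 → ℝ≥0) : Prop :=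
  ∀ (X : Type) [MetricSpace X],
    (∀ x y : X, (f (nndist x y) = 0 ↔ x = y)) ∧
    (∀ x y : X, f (nndist x y) = f (nndist y x)) ∧
    (∀ x y z : X, f (nndist x z) ≤ f (nndist x y) + f (nndist y z))

/-- Diameter of a set with respect to an explicitly given distance function. -/
def diamD {α : Type*} (d : α → α → ℝ) (A : Set α) : ℝ≥0∞ :=
  ⨆ (x : α) (_ : x ∈ A) (y : α) (_ : y ∈ A), ENNReal.ofReal (d x y)

/-- Partial diameter `diam(μ; a)`: the infimum of diameters of Borel sets of measure at
least `a`, with respect to an explicitly given distance function. -/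
def partialDiamD {α : Type*} [MeasurableSpace α] (d : α → α → ℝ) (μ : Measure α) (a : ℝ) :
    ℝ≥0∞ :=
  ⨅ (A : Set α) (_ : MeasurableSet A ∧ ENNReal.ofReal a ≤ μ A), diamD d A

/-- Observable diameter `ObsDiam((α,d,μ); -κ)` with respect to an explicitly given
distance function `d`. -/
def obsDiamD {α : Type*} [MeasurableSpace α] (d : α → α → ℝ) (μ : Measure α) (κ : ℝ) :
    ℝ≥0∞ :=
  ⨆ (f : α → ℝ) (_ : Measurable f ∧ ∀ x y, |f x - f y| ≤ d x y),
    partialDiamD (fun a b : ℝ => dist a b) (μ.map f) (1 - κ)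

/-- Concentration function `α_{(α,d,μ)}(r)` with respect to an explicitly given distance
function `d`. -/
def concFnD {α : Type*} [MeasurableSpace α] (d : α → α → ℝ) (μ : Measure α) (r : ℝ) :
    ℝ≥0∞ :=
  ⨆ (A : Set α) (_ : MeasurableSet A ∧ ENNReal.ofReal (1 / 2) ≤ μ A),
    1 - μ {x | ∃ a ∈ A, d x a < r}

/-- The λ-Prokhorov distance between Borel probability measures, with respect to an
explicitly given distance function `d` (so that `U_ε(A) = {x | ∃ a ∈ A, d x a < ε}`). -/
def prokDistD {α : Type*} [MeasurableSpace α] (d : α → α → ℝ) (lam : ℝ)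
    (μ ν : Measure α) : ℝ :=
  sInf {ε : ℝ | 0 < ε ∧ ∀ A : Set α, MeasurableSet A →
    ν A ≤ μ {x | ∃ a ∈ A, d x a < ε} + ENNReal.ofReal (lam * ε)}

/-- The box distance between `(α, dα, μ)` and `(β, dβ, ν)`, with explicitly given
distance functions. A parameter of `(α, μ)` is a measurable map `φ : [0,1) → α`
pushing the Lebesgue measure forward to `μ`. -/
def boxDistD {α β : Type*} [MeasurableSpace α] [MeasurableSpace β]
    (dα : α → α → ℝ) (dβ : β → β → ℝ) (μ : Measure α) (ν : Measure β) : ℝ :=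
  sInf {ε : ℝ | 0 ≤ ε ∧ ∃ (φ : ℝ → α) (ψ : ℝ → β), Measurable φ ∧ Measurable ψ ∧
    (volume.restrict (Set.Ico (0 : ℝ) 1)).map φ = μ ∧
    (volume.restrict (Set.Ico (0 : ℝ) 1)).map ψ = ν ∧
    ∃ I₀ : Set ℝ, I₀ ⊆ Set.Ico (0 : ℝ) 1 ∧ MeasurableSet I₀ ∧
      ENNReal.ofReal (1 - ε) ≤ volume I₀ ∧
      ∀ s ∈ I₀, ∀ t ∈ I₀, |dα (φ s) (φ t) - dβ (ψ s) (ψ t)| ≤ ε}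

/-- The value `F_p^N(s_1, …, s_N)`: the `l_p` combination of nonnegative reals. -/
def lpVal (p : ℝ≥0∞) {N : ℕ} (s : Fin N → ℝ≥0) : ℝ≥0 :=
  if p = ∞ then Finset.univ.sup s else (∑ i, s i ^ p.toReal) ^ (1 / p.toReal)

/-- Distance between two sets with respect to an explicitly given distance function. -/
def setDistD {α β : Type*} (d : α → β → ℝ) (A : Set α) (B : Set β) : ℝ :=
  sInf (Set.image2 d A B)

end

noncomputable section BoxHelpers
open Set ProbabilityTheory


variable (ν : Measure ℝ) [IsProbabilityMeasure ν]

/-- quantile function -/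
def qtl (t : ℝ) : ℝ := sInf {x | t ≤ cdf ν x}

variable {ν}

lemma qtl_set_nonempty {t : ℝ} (ht : t < 1) : {x | t ≤ cdf ν x}.Nonempty := by
  have := (tendsto_cdf_atTop ν).eventually (eventually_ge_nhds ht)
  rcases this.exists with ⟨x, hx⟩
  exact ⟨x, hx⟩

lemma qtl_set_bddBelow {t : ℝ} (ht : 0 < t) : BddBelow {x | t ≤ cdf ν x} := by
  have := (tendsto_cdf_atBot ν).eventually (eventually_lt_nhds ht)
  rcases eventually_atBot.mp this with ⟨B, hB⟩
  refine ⟨B, fun y hy => ?_⟩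
  by_contra hlt
  push_neg at hlt
  exact absurd hy (by simpa using (hB y hlt.le).not_ge)

lemma qtl_le_iff {t x : ℝ} (ht : 0 < t) (ht1 : t < 1) : qtl ν t ≤ x ↔ t ≤ cdf ν x := by
  constructor
  · intro h
    refine le_trans ?_ (monotone_cdf ν h)
    by_contra hlt
    push_neg at hlt
    have hrc := (cdf ν).right_continuous (qtl ν t)
    have hmem : {y | cdf ν y < t} ∈ 𝓝[≥] (qtl ν t) := hrc (Iio_mem_nhds hlt)
    rcases mem_nhdsGE_iff_exists_Ico_subset.mp hmem with ⟨u, hu, hsub⟩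
    have : sInf {x | t ≤ cdf ν x} < u := hu
    rcases (csInf_lt_iff (qtl_set_bddBelow ht) (qtl_set_nonempty ht1)).mp this with ⟨s, hs, hsu⟩
    have : cdf ν s < t := hsub ⟨csInf_le (qtl_set_bddBelow ht) hs, hsu⟩
    exact absurd hs (by simpa using this.not_ge)
  · intro h
    exact csInf_le (qtl_set_bddBelow ht) h

lemma qtl_monotoneOn : MonotoneOn (qtl ν) (Ioo (0:ℝ) 1) := by
  intro t ht t' ht' htt'
  exact csInf_le_csInf (qtl_set_bddBelow ht.1) (qtl_set_nonempty ht'.2)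
    (fun x hx => le_trans htt' hx)

lemma qtl_measurable_param :
    Measurable (fun t : ℝ => if ht : t ∈ Ioo (0:ℝ) 1 then qtl ν t else qtl ν (1/2)) := by
  have hmono : Monotone (fun t : Ioo (0:ℝ) 1 => qtl ν t) := by
    intro a b hab
    exact qtl_monotoneOn a.2 b.2 hab
  exact Measurable.dite hmono.measurable measurable_const measurableSet_Ioo

lemma qtl_param_map :
    (volume.restrict (Set.Ico (0 : ℝ) 1)).map
      (fun t : ℝ => if ht : t ∈ Ioo (0:ℝ) 1 then qtl ν t else qtl ν (1/2)) = ν := by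
  set φ := fun t : ℝ => if ht : t ∈ Ioo (0:ℝ) 1 then qtl ν t else qtl ν (1/2) with hφ
  have hφm : Measurable φ := qtl_measurable_param
  have hprob : IsProbabilityMeasure (volume.restrict (Set.Ico (0 : ℝ) 1)) := by
    constructor
    rw [Measure.restrict_apply MeasurableSet.univ, Set.univ_inter, Real.volume_Ico]
    norm_num
  have : IsProbabilityMeasure ((volume.restrict (Set.Ico (0 : ℝ) 1)).map φ) :=
    Measure.isProbabilityMeasure_map hφm.aemeasurable
  refine Measure.ext_of_Iic _ _ (fun x => ?_)
  rw [Measure.map_apply hφm measurableSet_Iic,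
    Measure.restrict_apply (hφm measurableSet_Iic)]
  have hkey : φ ⁻¹' (Iic x) ∩ Ioo (0:ℝ) 1 = Iic (cdf ν x) ∩ Ioo (0:ℝ) 1 := by
    ext t
    simp only [mem_inter_iff, mem_preimage, mem_Iic, and_congr_left_iff]
    intro ht
    rw [hφ]
    simp only [ht, dif_pos]
    exact qtl_le_iff ht.1 ht.2
  have hc0 : 0 ≤ cdf ν x := cdf_nonneg ν x
  have hc1 : cdf ν x ≤ 1 := cdf_le_one ν x
  have hvol : volume (φ ⁻¹' (Iic x) ∩ Ioo (0:ℝ) 1) = ENNReal.ofReal (cdf ν x) := by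
    apply le_antisymm
    · calc volume (φ ⁻¹' (Iic x) ∩ Ioo (0:ℝ) 1) ≤ volume (Ioc (0:ℝ) (cdf ν x)) := by
            apply measure_mono
            rw [hkey]
            rintro t ⟨ht1, ht2, ht3⟩
            exact ⟨ht2, ht1⟩
        _ = ENNReal.ofReal (cdf ν x) := by rw [Real.volume_Ioc]; norm_num
    · calc ENNReal.ofReal (cdf ν x) = volume (Ioo (0:ℝ) (cdf ν x)) := by
            rw [Real.volume_Ioo]; norm_num
        _ ≤ volume (φ ⁻¹' (Iic x) ∩ Ioo (0:ℝ) 1) := by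
            apply measure_mono
            rw [hkey]
            rintro t ⟨ht1, ht2⟩
            exact ⟨ht2.le, ht1, lt_of_lt_of_le ht2 hc1⟩
  have hsub : φ ⁻¹' (Iic x) ∩ Ico (0:ℝ) 1 ⊆ (φ ⁻¹' (Iic x) ∩ Ioo (0:ℝ) 1) ∪ {0} := by
    rintro t ⟨ht1, ht2, ht3⟩
    rcases eq_or_lt_of_le ht2 with h | h
    · exact Or.inr (by simp [← h])
    · exact Or.inl ⟨ht1, h, ht3⟩
  have h1 : volume (φ ⁻¹' (Iic x) ∩ Ico (0:ℝ) 1) ≤ ENNReal.ofReal (cdf ν x) := by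
    calc volume (φ ⁻¹' (Iic x) ∩ Ico (0:ℝ) 1)
        ≤ volume ((φ ⁻¹' (Iic x) ∩ Ioo (0:ℝ) 1) ∪ {0}) := measure_mono hsub
      _ ≤ volume (φ ⁻¹' (Iic x) ∩ Ioo (0:ℝ) 1) + volume ({0} : Set ℝ) := measure_union_le _ _
      _ = ENNReal.ofReal (cdf ν x) := by rw [hvol, Real.volume_singleton, add_zero]
  have h2 : ENNReal.ofReal (cdf ν x) ≤ volume (φ ⁻¹' (Iic x) ∩ Ico (0:ℝ) 1) := by
    rw [← hvol]
    exact measure_mono (inter_subset_inter_right _ Ioo_subset_Ico_self)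
  rw [le_antisymm h1 h2, ofReal_cdf]

/-- Every Borel probability measure on a standard Borel space admits a parameter. -/
lemma exists_param {α : Type*} [MeasurableSpace α] [StandardBorelSpace α]
    (μ : Measure α) [IsProbabilityMeasure μ] :
    ∃ φ : ℝ → α, Measurable φ ∧ (volume.restrict (Set.Ico (0 : ℝ) 1)).map φ = μ := by
  have hne : Nonempty α := by
    by_contra h
    rw [not_nonempty_iff] at h
    have := measure_univ (μ := μ)
    rw [Set.univ_eq_empty_iff.mpr h, measure_empty] at this
    exact zero_ne_one this
  obtain ⟨x₀⟩ := hne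
  obtain ⟨f, hf⟩ := MeasureTheory.exists_measurableEmbedding_real α
  set ν : Measure ℝ := μ.map f with hν
  have : IsProbabilityMeasure ν := Measure.isProbabilityMeasure_map hf.measurable.aemeasurable
  -- parameter of ν
  set g : ℝ → ℝ := fun t => if ht : t ∈ Ioo (0:ℝ) 1 then qtl ν t else qtl ν (1/2) with hg
  have hgm : Measurable g := qtl_measurable_param
  have hgmap : (volume.restrict (Set.Ico (0 : ℝ) 1)).map g = ν := qtl_param_map
  -- retraction ρ : ℝ → α with ρ ∘ f = id
  classical
  set ρ : ℝ → α := fun r =>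
    Set.rangeSplitting f (if hr : r ∈ Set.range f then ⟨r, hr⟩ else ⟨f x₀, mem_range_self x₀⟩)
    with hρ
  have hρm : Measurable ρ := by
    apply hf.measurable_rangeSplitting.comp
    exact Measurable.dite (f := fun x : (Set.range f) => x) measurable_id
      (g := fun _ => ⟨f x₀, mem_range_self x₀⟩) measurable_const hf.measurableSet_range
  have hρf : ∀ x : α, ρ (f x) = x := by
    intro x
    have hr : f x ∈ Set.range f := mem_range_self x
    simp only [hρ, dif_pos hr]
    exact Set.rightInverse_rangeSplitting hf.injective x
  refine ⟨ρ ∘ g, hρm.comp hgm, ?_⟩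
  rw [← Measure.map_map hρm hgm, hgmap, hν, Measure.map_map hρm hf.measurable]
  have : ρ ∘ f = id := funext hρf
  rw [this, Measure.map_id]

section lpval
variable {p : ℝ≥0∞}

lemma lpVal_mono {N : ℕ} {s t : Fin N → ℝ≥0} (h : ∀ i, s i ≤ t i) :
    lpVal p s ≤ lpVal p t := by
  unfold lpVal
  split
  · exact Finset.sup_mono_fun (fun i _ => h i)
  · refine NNReal.rpow_le_rpow ?_ (by positivity)
    exact Finset.sum_le_sum fun i _ => NNReal.rpow_le_rpow (h i) ENNReal.toReal_nonneg

lemma one_le_toReal_of (hp : 1 ≤ p) (hp' : p ≠ ∞) : 1 ≤ p.toReal := by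
  have := ENNReal.toReal_mono hp' hp
  simpa using this

lemma lpVal_add_le (hp : 1 ≤ p) {N : ℕ} (s t : Fin N → ℝ≥0) :
    lpVal p (s + t) ≤ lpVal p s + lpVal p t := by
  unfold lpVal
  split
  · refine Finset.sup_le fun i _ => ?_
    exact add_le_add (Finset.le_sup (Finset.mem_univ i)) (Finset.le_sup (Finset.mem_univ i))
  · exact NNReal.Lp_add_le Finset.univ s t (one_le_toReal_of hp (by assumption))

lemma sup_univ_fin_two (f : Fin 2 → ℝ≥0) : Finset.univ.sup f = f 0 ⊔ f 1 := by
  have : (Finset.univ : Finset (Fin 2)) = {0, 1} := rfl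
  rw [this, Finset.sup_insert, Finset.sup_singleton]

lemma lpVal_pair_zero_right (hp : 1 ≤ p) (a : ℝ≥0) : lpVal p ![a, 0] = a := by
  unfold lpVal
  split
  · rw [sup_univ_fin_two]; simp
  · have hc : 1 ≤ p.toReal := one_le_toReal_of hp (by assumption)
    have hc0 : p.toReal ≠ 0 := by linarith
    rw [Fin.sum_univ_two]
    simp only [Matrix.cons_val_zero, Matrix.cons_val_one, Matrix.head_cons]
    rw [NNReal.zero_rpow hc0, add_zero, ← NNReal.rpow_mul]
    rw [mul_one_div, div_self hc0, NNReal.rpow_one]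

lemma lpVal_pair_zero_left (hp : 1 ≤ p) (b : ℝ≥0) : lpVal p ![0, b] = b := by
  unfold lpVal
  split
  · rw [sup_univ_fin_two]; simp
  · have hc : 1 ≤ p.toReal := one_le_toReal_of hp (by assumption)
    have hc0 : p.toReal ≠ 0 := by linarith
    rw [Fin.sum_univ_two]
    simp only [Matrix.cons_val_zero, Matrix.cons_val_one, Matrix.head_cons]
    rw [NNReal.zero_rpow hc0, zero_add, ← NNReal.rpow_mul]
    rw [mul_one_div, div_self hc0, NNReal.rpow_one]

lemma lpVal_pair_le_add (hp : 1 ≤ p) (a b : ℝ≥0) : lpVal p ![a, b] ≤ a + b := by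
  have h : (![a, b] : Fin 2 → ℝ≥0) = ![a, 0] + ![0, b] := by
    funext i
    fin_cases i <;> simp
  calc lpVal p ![a, b] = lpVal p (![a, 0] + ![0, b]) := by rw [← h]
    _ ≤ lpVal p ![a, 0] + lpVal p ![0, b] := lpVal_add_le hp _ _
    _ = a + b := by rw [lpVal_pair_zero_right hp, lpVal_pair_zero_left hp]

lemma lpVal_lipschitz (hp : 1 ≤ p) (a b c d : ℝ≥0) :
    |(lpVal p ![a, b] : ℝ) - (lpVal p ![c, d] : ℝ)| ≤ |(a : ℝ) - c| + |(b : ℝ) - d| := by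
  have key : ∀ a b c d : ℝ≥0,
      (lpVal p ![a, b] : ℝ) ≤ (lpVal p ![c, d] : ℝ) + (|(a:ℝ) - c| + |(b:ℝ) - d|) := by
    intro a b c d
    set e₁ : ℝ≥0 := Real.toNNReal |(a:ℝ) - c| with he₁
    set e₂ : ℝ≥0 := Real.toNNReal |(b:ℝ) - d| with he₂
    have h1 : a ≤ c + e₁ := by
      rw [← NNReal.coe_le_coe]
      push_cast [he₁, Real.coe_toNNReal _ (abs_nonneg _)]
      have := abs_sub_abs_le_abs_sub (a:ℝ) (c:ℝ)
      have h := le_abs_self ((a:ℝ) - c)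
      linarith
    have h2 : b ≤ d + e₂ := by
      rw [← NNReal.coe_le_coe]
      push_cast [he₂, Real.coe_toNNReal _ (abs_nonneg _)]
      have h := le_abs_self ((b:ℝ) - d)
      linarith
    have hmono : lpVal p ![a, b] ≤ lpVal p (![c, d] + ![e₁, e₂]) := by
      apply lpVal_mono
      intro i
      fin_cases i <;> simpa using (by assumption)
    have : lpVal p ![a, b] ≤ lpVal p ![c, d] + (e₁ + e₂) := by
      refine hmono.trans ((lpVal_add_le hp _ _).trans ?_)
      exact add_le_add_right (lpVal_pair_le_add hp _ _) _
    calc (lpVal p ![a, b] : ℝ) ≤ (lpVal p ![c, d] : ℝ) + ((e₁ : ℝ) + e₂) := by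
          exact_mod_cast this
      _ = (lpVal p ![c, d] : ℝ) + (|(a:ℝ) - c| + |(b:ℝ) - d|) := by
          rw [he₁, he₂, Real.coe_toNNReal _ (abs_nonneg _), Real.coe_toNNReal _ (abs_nonneg _)]
  rw [abs_sub_le_iff]
  constructor
  · have := key a b c d; linarith
  · have := key c d a b
    rw [abs_sub_comm (c:ℝ) a, abs_sub_comm (d:ℝ) b] at this
    linarith

end lpval

end BoxHelpers


noncomputable section BoxMain
open Set ProbabilityTheory

/-- The defining set of the box distance. -/
def boxSet {α β : Type*} [MeasurableSpace α] [MeasurableSpace β]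
    (dα : α → α → ℝ) (dβ : β → β → ℝ) (μ : Measure α) (ν : Measure β) : Set ℝ :=
  {ε : ℝ | 0 ≤ ε ∧ ∃ (φ : ℝ → α) (ψ : ℝ → β), Measurable φ ∧ Measurable ψ ∧
    (volume.restrict (Set.Ico (0 : ℝ) 1)).map φ = μ ∧
    (volume.restrict (Set.Ico (0 : ℝ) 1)).map ψ = ν ∧
    ∃ I₀ : Set ℝ, I₀ ⊆ Set.Ico (0 : ℝ) 1 ∧ MeasurableSet I₀ ∧
      ENNReal.ofReal (1 - ε) ≤ volume I₀ ∧
      ∀ s ∈ I₀, ∀ t ∈ I₀, |dα (φ s) (φ t) - dβ (ψ s) (ψ t)| ≤ ε}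

lemma boxDistD_eq_sInf {α β : Type*} [MeasurableSpace α] [MeasurableSpace β]
    (dα : α → α → ℝ) (dβ : β → β → ℝ) (μ : Measure α) (ν : Measure β) :
    boxDistD dα dβ μ ν = sInf (boxSet dα dβ μ ν) := rfl

lemma boxSet_bddBelow {α β : Type*} [MeasurableSpace α] [MeasurableSpace β]
    (dα : α → α → ℝ) (dβ : β → β → ℝ) (μ : Measure α) (ν : Measure β) :
    BddBelow (boxSet dα dβ μ ν) := ⟨0, fun ε hε => hε.1⟩

lemma one_mem_boxSet {α β : Type*} [MeasurableSpace α] [MeasurableSpace β]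
    [StandardBorelSpace α] [StandardBorelSpace β]
    (dα : α → α → ℝ) (dβ : β → β → ℝ) (μ : Measure α) (ν : Measure β)
    [IsProbabilityMeasure μ] [IsProbabilityMeasure ν] :
    (1 : ℝ) ∈ boxSet dα dβ μ ν := by
  obtain ⟨φ, hφm, hφ⟩ := exists_param μ
  obtain ⟨ψ, hψm, hψ⟩ := exists_param ν
  exact ⟨zero_le_one, φ, ψ, hφm, hψm, hφ, hψ, ∅, empty_subset _, MeasurableSet.empty,
    by simp, fun s hs => absurd hs (notMem_empty s)⟩

lemma restrict_Ico_isProbability : IsProbabilityMeasure (volume.restrict (Set.Ico (0:ℝ) 1)) := by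
  constructor
  rw [Measure.restrict_apply MeasurableSet.univ, Set.univ_inter, Real.volume_Ico]
  norm_num

lemma combine_mem {X Y Z W : Type}
    [MetricSpace X] [MeasurableSpace X] [MetricSpace Y] [MeasurableSpace Y]
    [MetricSpace Z] [MeasurableSpace Z] [MetricSpace W] [MeasurableSpace W]
    (μX : Measure X) [IsProbabilityMeasure μX] (μY : Measure Y) [IsProbabilityMeasure μY]
    (μZ : Measure Z) [IsProbabilityMeasure μZ] (μW : Measure W) [IsProbabilityMeasure μW]
    (p : ℝ≥0∞) (hp : 1 ≤ p) {ε₁ ε₂ : ℝ}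
    (h₁ : ε₁ ∈ boxSet dist dist μX μY) (h₂ : ε₂ ∈ boxSet dist dist μZ μW) :
    ε₁ + ε₂ ∈ boxSet (fun a b : X × Z => (lpVal p ![nndist a.1 b.1, nndist a.2 b.2] : ℝ))
      (fun a b : Y × W => (lpVal p ![nndist a.1 b.1, nndist a.2 b.2] : ℝ))
      (μX.prod μZ) (μY.prod μW) := by
  obtain ⟨hε₁, φ₁, ψ₁, hφ₁m, hψ₁m, hφ₁, hψ₁, I₁, hI₁sub, hI₁meas, hI₁vol, hI₁d⟩ := h₁
  obtain ⟨hε₂, φ₂, ψ₂, hφ₂m, hψ₂m, hφ₂, hψ₂, I₂, hI₂sub, hI₂meas, hI₂vol, hI₂d⟩ := h₂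
  haveI := restrict_Ico_isProbability
  set L₀ : Measure ℝ := volume.restrict (Set.Ico (0:ℝ) 1) with hL₀
  haveI : IsProbabilityMeasure (L₀.prod L₀) := by infer_instance
  obtain ⟨T, hTm, hT⟩ := exists_param (L₀.prod L₀)
  refine ⟨by linarith, fun t => (φ₁ (T t).1, φ₂ (T t).2), fun t => (ψ₁ (T t).1, ψ₂ (T t).2),
    ?_, ?_, ?_, ?_, ?_⟩
  · exact ((hφ₁m.comp (measurable_fst.comp hTm)).prodMk (hφ₂m.comp (measurable_snd.comp hTm)))
  · exact ((hψ₁m.comp (measurable_fst.comp hTm)).prodMk (hψ₂m.comp (measurable_snd.comp hTm)))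
  · have : (fun t => (φ₁ (T t).1, φ₂ (T t).2)) = (Prod.map φ₁ φ₂) ∘ T := rfl
    rw [this, ← Measure.map_map (hφ₁m.prodMap hφ₂m) hTm, hT,
      ← Measure.map_prod_map _ _ hφ₁m hφ₂m, hφ₁, hφ₂]
  · have : (fun t => (ψ₁ (T t).1, ψ₂ (T t).2)) = (Prod.map ψ₁ ψ₂) ∘ T := rfl
    rw [this, ← Measure.map_map (hψ₁m.prodMap hψ₂m) hTm, hT,
      ← Measure.map_prod_map _ _ hψ₁m hψ₂m, hψ₁, hψ₂]
  · refine ⟨T ⁻¹' (I₁ ×ˢ I₂) ∩ Set.Ico (0:ℝ) 1, inter_subset_right, 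
      (hTm (hI₁meas.prod hI₂meas)).inter measurableSet_Ico, ?_, ?_⟩
    · have hv : volume (T ⁻¹' (I₁ ×ˢ I₂) ∩ Set.Ico (0:ℝ) 1) = (L₀.prod L₀) (I₁ ×ˢ I₂) := by
        rw [← hT, Measure.map_apply hTm (hI₁meas.prod hI₂meas),
          Measure.restrict_apply (hTm (hI₁meas.prod hI₂meas))]
      rw [hv, Measure.prod_prod]
      have e₁ : L₀ I₁ = volume I₁ := by
        rw [hL₀, Measure.restrict_apply hI₁meas, inter_eq_self_of_subset_left hI₁sub]
      have e₂ : L₀ I₂ = volume I₂ := by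
        rw [hL₀, Measure.restrict_apply hI₂meas, inter_eq_self_of_subset_left hI₂sub]
      rw [e₁, e₂]
      rcases le_or_gt (1 - (ε₁ + ε₂)) 0 with h | h
      · rw [ENNReal.ofReal_eq_zero.mpr h]; exact zero_le
      · have h1 : (0:ℝ) < 1 - ε₁ := by linarith
        have h2 : (0:ℝ) < 1 - ε₂ := by linarith
        calc ENNReal.ofReal (1 - (ε₁ + ε₂)) ≤ ENNReal.ofReal ((1 - ε₁) * (1 - ε₂)) := by
              apply ENNReal.ofReal_le_ofReal; nlinarith
          _ = ENNReal.ofReal (1 - ε₁) * ENNReal.ofReal (1 - ε₂) :=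
              ENNReal.ofReal_mul h1.le
          _ ≤ volume I₁ * volume I₂ := mul_le_mul' hI₁vol hI₂vol
    · rintro s ⟨hs, hs'⟩ t ⟨ht, ht'⟩
      rw [mem_preimage, mem_prod] at hs ht
      have key := lpVal_lipschitz (p := p) hp
        (nndist (φ₁ (T s).1) (φ₁ (T t).1)) (nndist (φ₂ (T s).2) (φ₂ (T t).2))
        (nndist (ψ₁ (T s).1) (ψ₁ (T t).1)) (nndist (ψ₂ (T s).2) (ψ₂ (T t).2))
      simp only [coe_nndist] at key
      have b₁ := hI₁d _ hs.1 _ ht.1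
      have b₂ := hI₂d _ hs.2 _ ht.2
      have habs := abs_sub_abs_le_abs_sub (dist (φ₁ (T s).1) (φ₁ (T t).1))
        (dist (ψ₁ (T s).1) (ψ₁ (T t).1))
      calc |(lpVal p ![nndist (φ₁ (T s).1) (φ₁ (T t).1), nndist (φ₂ (T s).2) (φ₂ (T t).2)] : ℝ) -
            (lpVal p ![nndist (ψ₁ (T s).1) (ψ₁ (T t).1), nndist (ψ₂ (T s).2) (ψ₂ (T t).2)] : ℝ)|
          ≤ |dist (φ₁ (T s).1) (φ₁ (T t).1) - dist (ψ₁ (T s).1) (ψ₁ (T t).1)| +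
            |dist (φ₂ (T s).2) (φ₂ (T t).2) - dist (ψ₂ (T s).2) (ψ₂ (T t).2)| := key
        _ ≤ ε₁ + ε₂ := add_le_add b₁ b₂

end BoxMain

/-- For mm-spaces `X, Y, Z, W` and `p ∈ [1,∞]`,
`□(X ×_p Z, Y ×_p W) ≤ □(X,Y) + □(Z,W)`. -/
theorem boxDist_lp_prod_le (X Y Z W : Type)
    [MetricSpace X] [MeasurableSpace X] [BorelSpace X] [SeparableSpace X] [CompleteSpace X]
    [MetricSpace Y] [MeasurableSpace Y] [BorelSpace Y] [SeparableSpace Y] [CompleteSpace Y]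
    [MetricSpace Z] [MeasurableSpace Z] [BorelSpace Z] [SeparableSpace Z] [CompleteSpace Z]
    [MetricSpace W] [MeasurableSpace W] [BorelSpace W] [SeparableSpace W] [CompleteSpace W]
    (μX : Measure X) [IsProbabilityMeasure μX] (μY : Measure Y) [IsProbabilityMeasure μY]
    (μZ : Measure Z) [IsProbabilityMeasure μZ] (μW : Measure W) [IsProbabilityMeasure μW]
    (p : ℝ≥0∞) (hp : 1 ≤ p) :
    boxDistD (fun a b : X × Z => (lpVal p ![nndist a.1 b.1, nndist a.2 b.2] : ℝ))
        (fun a b : Y × W => (lpVal p ![nndist a.1 b.1, nndist a.2 b.2] : ℝ))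
        (μX.prod μZ) (μY.prod μW) ≤
      boxDistD dist dist μX μY + boxDistD dist dist μZ μW := by
  haveI : SecondCountableTopology X := UniformSpace.secondCountable_of_separable X
  haveI : SecondCountableTopology Y := UniformSpace.secondCountable_of_separable Y
  haveI : SecondCountableTopology Z := UniformSpace.secondCountable_of_separable Z
  haveI : SecondCountableTopology W := UniformSpace.secondCountable_of_separable W
  set dP := fun a b : X × Z => (lpVal p ![nndist a.1 b.1, nndist a.2 b.2] : ℝ) with hdP
  set dQ := fun a b : Y × W => (lpVal p ![nndist a.1 b.1, nndist a.2 b.2] : ℝ) with hdQ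
  rw [boxDistD_eq_sInf, boxDistD_eq_sInf, boxDistD_eq_sInf]
  set S := boxSet dP dQ (μX.prod μZ) (μY.prod μW) with hS
  set S₁ := boxSet dist dist μX μY with hS₁
  set S₂ := boxSet dist dist μZ μW with hS₂
  have h₁ne : S₁.Nonempty := ⟨1, one_mem_boxSet _ _ _ _⟩
  have h₂ne : S₂.Nonempty := ⟨1, one_mem_boxSet _ _ _ _⟩
  have hSbdd : BddBelow S := boxSet_bddBelow _ _ _ _
  have key : ∀ ε₁ ∈ S₁, ∀ ε₂ ∈ S₂, sInf S ≤ ε₁ + ε₂ := by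
    intro ε₁ hε₁ ε₂ hε₂
    exact csInf_le hSbdd (combine_mem μX μY μZ μW p hp hε₁ hε₂)
  have step : ∀ ε₂ ∈ S₂, sInf S ≤ sInf S₁ + ε₂ := by
    intro ε₂ hε₂
    have : sInf S - ε₂ ≤ sInf S₁ := by
      apply le_csInf h₁ne
      intro ε₁ hε₁
      have := key ε₁ hε₁ ε₂ hε₂
      linarith
    linarith
  have : sInf S - sInf S₁ ≤ sInf S₂ := by
    apply le_csInf h₂ne
    intro ε₂ hε₂
    have := step ε₂ hε₂
    linarith
  linarith
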